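/- For a rigged hypersurface, the 2-form V_{bc} = R̄^a_{abc} is exact: V = -dφ, where φ is the one-form φ_a = n(∇_{e_a} ℓ). -/

import Mathlib

noncomputable section

/-- Partial derivative in the `a`-th coordinate direction on `ℝ³`. -/
def pd (f : (Fin 3 → ℝ) → ℝ) (a : Fin 3) (ξ : Fin 3 → ℝ) : ℝ :=
  fderiv ℝ f ξ (Pi.single a 1)

/-- Ambient covariant derivative along `e a` of an ambient vector field along Σ. -/
def cov (Ch : (Fin 3 → ℝ) → Fin 4 → Fin 4 → Fin 4 → ℝ)
    (e : Fin 3 → (Fin 3 → ℝ) → Fin 4 → ℝ)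
    (a : Fin 3) (V : (Fin 3 → ℝ) → Fin 4 → ℝ) (ξ : Fin 3 → ℝ) (μ : Fin 4) : ℝ :=
  pd (fun ζ => V ζ μ) a ξ + ∑ ν, ∑ ρ, Ch ξ μ ν ρ * e a ξ ν * V ξ ρ

/-- Christoffel symbols `Γ̄^c_{ba} = ω^c(∇_{e_a} e_b)` of the rigged connection. -/
def Gbar (Ch : (Fin 3 → ℝ) → Fin 4 → Fin 4 → Fin 4 → ℝ)
    (e : Fin 3 → (Fin 3 → ℝ) → Fin 4 → ℝ)
    (ω : Fin 3 → (Fin 3 → ℝ) → Fin 4 → ℝ)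
    (c b a : Fin 3) (ξ : Fin 3 → ℝ) : ℝ :=
  ∑ μ, ω c ξ μ * cov Ch e a (e b) ξ μ

/-- The one-form `φ_a = n(∇_{e_a} ℓ)`. -/
def phiF (Ch : (Fin 3 → ℝ) → Fin 4 → Fin 4 → Fin 4 → ℝ)
    (e : Fin 3 → (Fin 3 → ℝ) → Fin 4 → ℝ)
    (n ℓ : (Fin 3 → ℝ) → Fin 4 → ℝ) (a : Fin 3) (ξ : Fin 3 → ℝ) : ℝ :=
  ∑ μ, n ξ μ * cov Ch e a ℓ ξ μ

/-- Curvature tensor `R̄^d_{abc}` of a connection on Σ with coefficients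
`Cb ξ d a c = Γ̄^d_{ac}` (derivative index last). -/
def RbarF (Cb : (Fin 3 → ℝ) → Fin 3 → Fin 3 → Fin 3 → ℝ)
    (d a b c : Fin 3) (ξ : Fin 3 → ℝ) : ℝ :=
  pd (fun ζ => Cb ζ d a c) b ξ - pd (fun ζ => Cb ζ d a b) c ξ
    + (∑ f, Cb ξ d b f * Cb ξ f a c) - ∑ f, Cb ξ d c f * Cb ξ f a b

lemma pd_add {f g : (Fin 3 → ℝ) → ℝ} {ξ} (hf : DifferentiableAt ℝ f ξ) (hg : DifferentiableAt ℝ g ξ) (a : Fin 3) :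
    pd (fun ζ => f ζ + g ζ) a ξ = pd f a ξ + pd g a ξ := by
  simp [pd, fderiv_fun_add hf hg]
lemma pd_mul {f g : (Fin 3 → ℝ) → ℝ} {ξ} (hf : DifferentiableAt ℝ f ξ) (hg : DifferentiableAt ℝ g ξ) (a : Fin 3) :
    pd (fun ζ => f ζ * g ζ) a ξ = f ξ * pd g a ξ + g ξ * pd f a ξ := by
  simp [pd, fderiv_fun_mul hf hg]
lemma pd_sum {ι : Type*} [Fintype ι] {F : ι → (Fin 3 → ℝ) → ℝ} {ξ}
    (h : ∀ i, DifferentiableAt ℝ (F i) ξ) (a : Fin 3) :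
    pd (fun ζ => ∑ i, F i ζ) a ξ = ∑ i, pd (F i) a ξ := by
  simp [pd, fderiv_fun_sum (fun i _ => h i)]
lemma cd_diff {f : (Fin 3 → ℝ) → ℝ} (hf : ContDiff ℝ (⊤ : ℕ∞) f) (ξ : Fin 3 → ℝ) :
    DifferentiableAt ℝ f ξ := (hf.differentiable (by simp)).differentiableAt

section aux
variable (Ch : (Fin 3 → ℝ) → Fin 4 → Fin 4 → Fin 4 → ℝ)
variable (e : Fin 3 → (Fin 3 → ℝ) → Fin 4 → ℝ)
variable (ℓ : (Fin 3 → ℝ) → Fin 4 → ℝ)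


lemma decomp (n : (Fin 3 → ℝ) → Fin 4 → ℝ)
    (ω : Fin 3 → (Fin 3 → ℝ) → Fin 4 → ℝ)
    (hcomp : ∀ ξ μ ν, ℓ ξ μ * n ξ ν + ∑ a, e a ξ μ * ω a ξ ν
      = if μ = ν then (1 : ℝ) else 0)
    (W : (Fin 3 → ℝ) → Fin 4 → ℝ) (ξ : Fin 3 → ℝ) (μ : Fin 4) :
    W ξ μ = (∑ ν, n ξ ν * W ξ ν) * ℓ ξ μ + ∑ d, (∑ ν, ω d ξ ν * W ξ ν) * e d ξ μ := by
  have h : ∀ ν, (if μ = ν then (1:ℝ) else 0) * W ξ ν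
      = (ℓ ξ μ * n ξ ν + ∑ a, e a ξ μ * ω a ξ ν) * W ξ ν := fun ν => by rw [hcomp]
  calc W ξ μ = ∑ ν, (if μ = ν then (1:ℝ) else 0) * W ξ ν := by simp
    _ = ∑ ν, (ℓ ξ μ * n ξ ν + ∑ a, e a ξ μ * ω a ξ ν) * W ξ ν :=
        Finset.sum_congr rfl fun ν _ => h ν
    _ = _ := by
        simp only [Fin.sum_univ_four, Fin.sum_univ_three]
        ring

lemma cov_expand
    (f : Fin 3 → (Fin 3 → ℝ) → ℝ) (g : (Fin 3 → ℝ) → ℝ)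
    (hf : ∀ d, ContDiff ℝ (⊤ : ℕ∞) (f d)) (hg : ContDiff ℝ (⊤ : ℕ∞) g)
    (he : ∀ a μ, ContDiff ℝ (⊤ : ℕ∞) (fun ζ => e a ζ μ))
    (hℓs : ∀ μ, ContDiff ℝ (⊤ : ℕ∞) (fun ζ => ℓ ζ μ))
    (b : Fin 3) (ξ : Fin 3 → ℝ) (μ : Fin 4) :
    cov Ch e b (fun ζ ν => g ζ * ℓ ζ ν + ∑ d, f d ζ * e d ζ ν) ξ μ
      = (pd g b ξ * ℓ ξ μ + g ξ * cov Ch e b ℓ ξ μ)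
        + ∑ d, (pd (f d) b ξ * e d ξ μ + f d ξ * cov Ch e b (e d) ξ μ) := by
  have hpd : pd (fun ζ => g ζ * ℓ ζ μ + ∑ d, f d ζ * e d ζ μ) b ξ
      = (g ξ * pd (fun ζ => ℓ ζ μ) b ξ + ℓ ξ μ * pd g b ξ)
        + ∑ d, (f d ξ * pd (fun ζ => e d ζ μ) b ξ + e d ξ μ * pd (f d) b ξ) := by
    rw [pd_add (DifferentiableAt.fun_mul (cd_diff hg ξ) (cd_diff (hℓs μ) ξ))
        (DifferentiableAt.fun_sum fun d _ => DifferentiableAt.fun_mul (cd_diff (hf d) ξ) (cd_diff (he d μ) ξ)),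
      pd_mul (cd_diff hg ξ) (cd_diff (hℓs μ) ξ),
      pd_sum (fun d => DifferentiableAt.fun_mul (cd_diff (hf d) ξ) (cd_diff (he d μ) ξ))]
    congr 1
    exact Finset.sum_congr rfl fun d _ => pd_mul (cd_diff (hf d) ξ) (cd_diff (he d μ) ξ) b
  simp only [cov]
  rw [hpd]
  simp only [Fin.sum_univ_four, Fin.sum_univ_three]
  ring

lemma contract_covcov
    (hChs : ∀ α β γ, ContDiff ℝ (⊤ : ℕ∞) (fun ζ => Ch ζ α β γ))
    (he : ∀ a μ, ContDiff ℝ (⊤ : ℕ∞) (fun ζ => e a ζ μ))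
    (hℓs : ∀ μ, ContDiff ℝ (⊤ : ℕ∞) (fun ζ => ℓ ζ μ))
    (n : (Fin 3 → ℝ) → Fin 4 → ℝ)
    (ω : Fin 3 → (Fin 3 → ℝ) → Fin 4 → ℝ)
    (hns : ∀ μ, ContDiff ℝ (⊤ : ℕ∞) (fun ζ => n ζ μ))
    (hωs : ∀ a μ, ContDiff ℝ (⊤ : ℕ∞) (fun ζ => ω a ζ μ))
    (hcomp : ∀ ξ μ ν, ℓ ξ μ * n ξ ν + ∑ a, e a ξ μ * ω a ξ ν
      = if μ = ν then (1 : ℝ) else 0)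
    (V : (Fin 3 → ℝ) → Fin 4 → ℝ) (hV : ∀ μ, ContDiff ℝ (⊤ : ℕ∞) (fun ζ => V ζ μ))
    (P : (Fin 3 → ℝ) → Fin 4 → ℝ)
    (b c : Fin 3) (ξ : Fin 3 → ℝ) :
    ∑ μ, P ξ μ * cov Ch e b (cov Ch e c V) ξ μ
      = (pd (fun ζ => ∑ ν, n ζ ν * cov Ch e c V ζ ν) b ξ * (∑ μ, P ξ μ * ℓ ξ μ)
          + (∑ ν, n ξ ν * cov Ch e c V ξ ν) * (∑ μ, P ξ μ * cov Ch e b ℓ ξ μ))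
        + ∑ d, (pd (fun ζ => ∑ ν, ω d ζ ν * cov Ch e c V ζ ν) b ξ * (∑ μ, P ξ μ * e d ξ μ)
          + (∑ ν, ω d ξ ν * cov Ch e c V ξ ν) * (∑ μ, P ξ μ * cov Ch e b (e d) ξ μ)) := by
  have hcd : ∀ W (hW : ∀ μ, ContDiff ℝ (⊤ : ℕ∞) (fun ζ => W ζ μ)) (a : Fin 3) (μ : Fin 4),
      ContDiff ℝ (⊤ : ℕ∞) (fun ξ => cov Ch e a W ξ μ) := by
    intro W hW a μ
    unfold cov
    refine ContDiff.add ?_ (ContDiff.sum fun ν _ => ContDiff.sum fun ρ _ =>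
      ((hChs μ ν ρ).mul (he a ν)).mul (hW ρ))
    unfold pd
    exact ((hW μ).fderiv_right (by simp)).clm_apply contDiff_const
  have hWd : cov Ch e c V = fun ζ ν => (∑ ν', n ζ ν' * cov Ch e c V ζ ν') * ℓ ζ ν
      + ∑ d, (∑ ν', ω d ζ ν' * cov Ch e c V ζ ν') * e d ζ ν := by
    funext ζ ν
    exact decomp e ℓ n ω hcomp (cov Ch e c V) ζ ν
  have key : ∀ μ, cov Ch e b (cov Ch e c V) ξ μ
      = ((pd (fun ζ => ∑ ν', n ζ ν' * cov Ch e c V ζ ν') b ξ * ℓ ξ μ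
          + (∑ ν', n ξ ν' * cov Ch e c V ξ ν') * cov Ch e b ℓ ξ μ)
        + ∑ d, (pd (fun ζ => ∑ ν', ω d ζ ν' * cov Ch e c V ζ ν') b ξ * e d ξ μ
          + (∑ ν', ω d ξ ν' * cov Ch e c V ξ ν') * cov Ch e b (e d) ξ μ)) := by
    intro μ
    conv_lhs => rw [hWd]
    exact cov_expand Ch e ℓ
      (fun d ζ => ∑ ν', ω d ζ ν' * cov Ch e c V ζ ν')
      (fun ζ => ∑ ν', n ζ ν' * cov Ch e c V ζ ν')
      (fun d => ContDiff.sum fun ν' _ => (hωs d ν').mul (hcd V hV c ν'))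
      (ContDiff.sum fun ν' _ => (hns ν').mul (hcd V hV c ν'))
      he hℓs b ξ μ
  simp only [key]
  simp only [Fin.sum_univ_four, Fin.sum_univ_three]
  ring

end aux

lemma cov_symm (Ch : (Fin 3 → ℝ) → Fin 4 → Fin 4 → Fin 4 → ℝ)
    (e : Fin 3 → (Fin 3 → ℝ) → Fin 4 → ℝ)
    (hChsym : ∀ ξ α β γ, Ch ξ α β γ = Ch ξ α γ β)
    (hesym : ∀ ξ a b μ, pd (fun ζ => e b ζ μ) a ξ = pd (fun ζ => e a ζ μ) b ξ)
    (a c : Fin 3) (ξ : Fin 3 → ℝ) (μ : Fin 4) :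
    cov Ch e c (e a) ξ μ = cov Ch e a (e c) ξ μ := by
  unfold cov
  rw [hesym ξ c a μ]
  congr 1
  rw [Finset.sum_comm]
  exact Finset.sum_congr rfl fun ν _ => Finset.sum_congr rfl fun ρ _ => by
    rw [hChsym ξ μ ρ ν]; ring

lemma trace_lemma (E Ω : Fin 3 → Fin 4 → ℝ) (L N : Fin 4 → ℝ) (T : Fin 4 → Fin 4 → ℝ)
    (hcomp : ∀ μ ν, L μ * N ν + ∑ a, E a μ * Ω a ν = if μ = ν then (1:ℝ) else 0)
    (hT : ∑ μ, T μ μ = 0) :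
    ∑ a, ∑ μ, Ω a μ * ∑ β, T μ β * E a β = - ∑ μ, N μ * ∑ β, T μ β * L β := by
  have key : ∀ μ ν, ∑ a, E a μ * Ω a ν = (if μ = ν then (1:ℝ) else 0) - L μ * N ν := fun μ ν => by
    have h := hcomp μ ν; linarith
  simp only [Fin.sum_univ_four, Fin.sum_univ_three] at key hT ⊢
  linear_combination (norm := (simp only [Fin.reduceEq, reduceIte, if_true, if_false]; try ring1)) T 0 0 * key 0 0 + T 0 1 * key 1 0 + T 0 2 * key 2 0 + T 0 3 * key 3 0 + T 1 0 * key 0 1 + T 1 1 * key 1 1 + T 1 2 * key 2 1 + T 1 3 * key 3 1 + T 2 0 * key 0 2 + T 2 1 * key 1 2 + T 2 2 * key 2 2 + T 2 3 * key 3 2 + T 3 0 * key 0 3 + T 3 1 * key 1 3 + T 3 2 * key 2 3 + T 3 3 * key 3 3 + hT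

/-- For a rigged hypersurface, the 2-form `V_{bc} = R̄^a_{abc}`
(trace of the curvature of the rigged connection) is exact: `V = -dφ`, where
`φ_a = n(∇_{e_a} ℓ)`. -/
theorem stmt10
    (Ch : (Fin 3 → ℝ) → Fin 4 → Fin 4 → Fin 4 → ℝ)
    (e : Fin 3 → (Fin 3 → ℝ) → Fin 4 → ℝ)
    (ℓ n : (Fin 3 → ℝ) → Fin 4 → ℝ)
    (ω : Fin 3 → (Fin 3 → ℝ) → Fin 4 → ℝ)
    (Riem : (Fin 3 → ℝ) → Fin 4 → Fin 4 → Fin 4 → Fin 4 → ℝ)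
    (hChsym : ∀ ξ α β γ, Ch ξ α β γ = Ch ξ α γ β)
    (hesym : ∀ ξ a b μ, pd (fun ζ => e b ζ μ) a ξ = pd (fun ζ => e a ζ μ) b ξ)
    (he : ∀ a μ, ContDiff ℝ (⊤ : ℕ∞) (fun ζ => e a ζ μ))
    (hℓs : ∀ μ, ContDiff ℝ (⊤ : ℕ∞) (fun ζ => ℓ ζ μ))
    (hns : ∀ μ, ContDiff ℝ (⊤ : ℕ∞) (fun ζ => n ζ μ))
    (hωs : ∀ a μ, ContDiff ℝ (⊤ : ℕ∞) (fun ζ => ω a ζ μ))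
    (hChs : ∀ α β γ, ContDiff ℝ (⊤ : ℕ∞) (fun ζ => Ch ζ α β γ))
    (hne : ∀ ξ a, ∑ μ, n ξ μ * e a ξ μ = 0)
    (hnl : ∀ ξ, ∑ μ, n ξ μ * ℓ ξ μ = 1)
    (hωl : ∀ ξ a, ∑ μ, ω a ξ μ * ℓ ξ μ = 0)
    (hωe : ∀ ξ a b, ∑ μ, ω a ξ μ * e b ξ μ = if a = b then (1 : ℝ) else 0)
    (hcomp : ∀ ξ μ ν, ℓ ξ μ * n ξ ν + ∑ a, e a ξ μ * ω a ξ ν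
      = if μ = ν then (1 : ℝ) else 0)
    (hRic : ∀ (V : (Fin 3 → ℝ) → Fin 4 → ℝ),
      (∀ ρ, ContDiff ℝ (⊤ : ℕ∞) (fun ζ => V ζ ρ)) →
      ∀ ξ a b μ, cov Ch e a (cov Ch e b V) ξ μ - cov Ch e b (cov Ch e a V) ξ μ
        = ∑ β, ∑ lam, ∑ σ, Riem ξ μ β lam σ * e a ξ lam * e b ξ σ * V ξ β)
    (hRtr : ∀ ξ lam σ, ∑ μ, Riem ξ μ μ lam σ = 0) :
    ∀ ξ (b c : Fin 3),
      (∑ a, RbarF (fun ζ x y z => Gbar Ch e ω x y z ζ) a a b c ξ)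
        = -(pd (fun ζ => phiF Ch e n ℓ c ζ) b ξ
            - pd (fun ζ => phiF Ch e n ℓ b ζ) c ξ) := by
  intro ξ b c
  -- Gbar symmetry at ξ (raw form)
  have hGs : ∀ (d a' c' : Fin 3),
      (∑ ν, ω d ξ ν * cov Ch e c' (e a') ξ ν) = ∑ ν, ω d ξ ν * cov Ch e a' (e c') ξ ν :=
    fun d a' c' => Finset.sum_congr rfl fun ν _ => by
      rw [cov_symm Ch e hChsym hesym a' c' ξ ν]
  -- Gauss contraction
  have hGauss : ∀ a m : Fin 3,
      (∑ μ, ω m ξ μ * (∑ β, ∑ lam, ∑ σ, Riem ξ μ β lam σ * e b ξ lam * e c ξ σ * e a ξ β))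
      = pd (fun ζ => ∑ ν, ω m ζ ν * cov Ch e c (e a) ζ ν) b ξ
          - pd (fun ζ => ∑ ν, ω m ζ ν * cov Ch e b (e a) ζ ν) c ξ
        + ((∑ d, (∑ ν, ω d ξ ν * cov Ch e c (e a) ξ ν) * (∑ μ, ω m ξ μ * cov Ch e b (e d) ξ μ))
          - ∑ d, (∑ ν, ω d ξ ν * cov Ch e b (e a) ξ ν) * (∑ μ, ω m ξ μ * cov Ch e c (e d) ξ μ))
        + ((∑ ν, n ξ ν * cov Ch e c (e a) ξ ν) * (∑ μ, ω m ξ μ * cov Ch e b ℓ ξ μ)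
          - (∑ ν, n ξ ν * cov Ch e b (e a) ξ ν) * (∑ μ, ω m ξ μ * cov Ch e c ℓ ξ μ)) := by
    intro a m
    have h1 := contract_covcov Ch e ℓ hChs he hℓs n ω hns hωs hcomp (e a) (he a) (ω m) b c ξ
    have h2 := contract_covcov Ch e ℓ hChs he hℓs n ω hns hωs hcomp (e a) (he a) (ω m) c b ξ
    have hric := hRic (e a) (he a) ξ b c
    calc (∑ μ, ω m ξ μ * (∑ β, ∑ lam, ∑ σ, Riem ξ μ β lam σ * e b ξ lam * e c ξ σ * e a ξ β))
        = ∑ μ, ω m ξ μ * (cov Ch e b (cov Ch e c (e a)) ξ μ - cov Ch e c (cov Ch e b (e a)) ξ μ) :=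
          Finset.sum_congr rfl fun μ _ => by rw [hric μ]
      _ = (∑ μ, ω m ξ μ * cov Ch e b (cov Ch e c (e a)) ξ μ)
            - ∑ μ, ω m ξ μ * cov Ch e c (cov Ch e b (e a)) ξ μ := by
          simp [mul_sub, Finset.sum_sub_distrib]
      _ = _ := by
          rw [h1, h2, hωl ξ m]
          simp only [hωe ξ m, mul_ite, mul_one, mul_zero, Finset.sum_add_distrib,
            Finset.sum_ite_eq, Finset.mem_univ, if_true]
          ring
  -- Codazzi contraction
  have hCod :
      (∑ μ, n ξ μ * (∑ β, ∑ lam, ∑ σ, Riem ξ μ β lam σ * e b ξ lam * e c ξ σ * ℓ ξ β))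
      = pd (fun ζ => ∑ ν, n ζ ν * cov Ch e c ℓ ζ ν) b ξ
          - pd (fun ζ => ∑ ν, n ζ ν * cov Ch e b ℓ ζ ν) c ξ
        + ((∑ d, (∑ ν, ω d ξ ν * cov Ch e c ℓ ξ ν) * (∑ μ, n ξ μ * cov Ch e b (e d) ξ μ))
          - ∑ d, (∑ ν, ω d ξ ν * cov Ch e b ℓ ξ ν) * (∑ μ, n ξ μ * cov Ch e c (e d) ξ μ)) := by
    have h1 := contract_covcov Ch e ℓ hChs he hℓs n ω hns hωs hcomp ℓ hℓs n b c ξ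
    have h2 := contract_covcov Ch e ℓ hChs he hℓs n ω hns hωs hcomp ℓ hℓs n c b ξ
    have hric := hRic ℓ hℓs ξ b c
    calc (∑ μ, n ξ μ * (∑ β, ∑ lam, ∑ σ, Riem ξ μ β lam σ * e b ξ lam * e c ξ σ * ℓ ξ β))
        = ∑ μ, n ξ μ * (cov Ch e b (cov Ch e c ℓ) ξ μ - cov Ch e c (cov Ch e b ℓ) ξ μ) :=
          Finset.sum_congr rfl fun μ _ => by rw [hric μ]
      _ = (∑ μ, n ξ μ * cov Ch e b (cov Ch e c ℓ) ξ μ)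
            - ∑ μ, n ξ μ * cov Ch e c (cov Ch e b ℓ) ξ μ := by
          simp [mul_sub, Finset.sum_sub_distrib]
      _ = _ := by
          rw [h1, h2, hnl ξ]
          simp only [hne ξ, mul_one, mul_zero, zero_mul, add_zero, zero_add]
          ring
  -- trace of Riemann contracted with e_b, e_c vanishes
  have hT0 : (∑ μ, ∑ lam, ∑ σ, Riem ξ μ μ lam σ * e b ξ lam * e c ξ σ) = 0 := by
    have hR := fun lam σ => hRtr ξ lam σ
    simp only [Fin.sum_univ_four] at hR ⊢
    linear_combination e b ξ 0 * e c ξ 0 * hR 0 0 + e b ξ 0 * e c ξ 1 * hR 0 1 + e b ξ 0 * e c ξ 2 * hR 0 2 + e b ξ 0 * e c ξ 3 * hR 0 3 + e b ξ 1 * e c ξ 0 * hR 1 0 + e b ξ 1 * e c ξ 1 * hR 1 1 + e b ξ 1 * e c ξ 2 * hR 1 2 + e b ξ 1 * e c ξ 3 * hR 1 3 + e b ξ 2 * e c ξ 0 * hR 2 0 + e b ξ 2 * e c ξ 1 * hR 2 1 + e b ξ 2 * e c ξ 2 * hR 2 2 + e b ξ 2 * e c ξ 3 * hR 2 3 + e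 b ξ 3 * e c ξ 0 * hR 3 0 + e b ξ 3 * e c ξ 1 * hR 3 1 + e b ξ 3 * e c ξ 2 * hR 3 2 + e b ξ 3 * e c ξ 3 * hR 3 3
  have hTr := trace_lemma (fun a β => e a ξ β) (fun a μ => ω a ξ μ) (fun β => ℓ ξ β)
    (fun μ => n ξ μ) (fun μ β => ∑ lam, ∑ σ, Riem ξ μ β lam σ * e b ξ lam * e c ξ σ)
    (fun μ ν => hcomp ξ μ ν) hT0
  simp only [Finset.sum_mul] at hTr
  -- per-a identification of Rbar with the Gauss expression
  have key : ∀ a : Fin 3,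
      RbarF (fun ζ x y z => Gbar Ch e ω x y z ζ) a a b c ξ
      = (∑ μ, ω a ξ μ * (∑ β, ∑ lam, ∑ σ, Riem ξ μ β lam σ * e b ξ lam * e c ξ σ * e a ξ β))
        - ((∑ ν, n ξ ν * cov Ch e c (e a) ξ ν) * (∑ μ, ω a ξ μ * cov Ch e b ℓ ξ μ)
          - (∑ ν, n ξ ν * cov Ch e b (e a) ξ ν) * (∑ μ, ω a ξ μ * cov Ch e c ℓ ξ μ)) := by
    intro a
    have h := hGauss a a
    simp only [RbarF, Gbar]
    simp only [Fin.sum_univ_three] at h ⊢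
    linear_combination -h
      + (∑ ν, ω 0 ξ ν * cov Ch e c (e a) ξ ν) * hGs a b 0
      + (∑ ν, ω 1 ξ ν * cov Ch e c (e a) ξ ν) * hGs a b 1
      + (∑ ν, ω 2 ξ ν * cov Ch e c (e a) ξ ν) * hGs a b 2
      - (∑ ν, ω 0 ξ ν * cov Ch e b (e a) ξ ν) * hGs a c 0
      - (∑ ν, ω 1 ξ ν * cov Ch e b (e a) ξ ν) * hGs a c 1
      - (∑ ν, ω 2 ξ ν * cov Ch e b (e a) ξ ν) * hGs a c 2
  -- final assembly
  simp only [phiF]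
  simp only [Fin.sum_univ_three] at hTr hCod ⊢
  linear_combination key 0 + key 1 + key 2 + hTr - hCod

end
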